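/- Let L ≤ ℂⁿ be a ℂ-linear subspace defined over ℝ. Then exp(L)·𝕊₁ⁿ = Log⁻¹(ℜ(L)), where exp(L)·𝕊₁ⁿ := {(s₁e^{l₁},…,sₙe^{lₙ}) : s ∈ 𝕊₁ⁿ, l ∈ L}. -/

import Mathlib

open scoped BigOperators

noncomputable section

/-- Laurent polynomials in `n` variables over `ℂ`, given by finitely supported
coefficient functions on the exponent lattice `ℤⁿ`. -/
abbrev LaurentPoly (n : ℕ) : Type := (Fin n → ℤ) →₀ ℂ

/-- Evaluation of a Laurent polynomial at a point of the torus `(ℂˣ)ⁿ`. -/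
def LaurentPoly.eval {n : ℕ} (p : LaurentPoly n) (w : Fin n → ℂˣ) : ℂ :=
  ∑ k ∈ p.support, p k * ∏ i, ((w i : ℂ) ^ (k i))

/-- The Zariski topology on the torus `(ℂˣ)ⁿ`: generated by complements of
zero sets of Laurent polynomials. -/
def zariskiTorus (n : ℕ) : TopologicalSpace (Fin n → ℂˣ) :=
  TopologicalSpace.generateFrom
    {U | ∃ p : LaurentPoly n, U = {w | LaurentPoly.eval p w ≠ 0}}

/-- An algebraic subvariety of `(ℂˣ)ⁿ`: the common zero set of finitely many
Laurent polynomials. -/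
def IsSubvariety {n : ℕ} (W : Set (Fin n → ℂˣ)) : Prop :=
  ∃ F : Finset (LaurentPoly n), W = {w | ∀ p ∈ F, LaurentPoly.eval p w = 0}

/-- An irreducible algebraic subvariety of `(ℂˣ)ⁿ`. -/
def IsIrrSubvariety {n : ℕ} (W : Set (Fin n → ℂˣ)) : Prop :=
  IsSubvariety W ∧ @IsIrreducible _ (zariskiTorus n) W

/-- A `ℚ`-linear subspace of `ℂⁿ`: a `ℂ`-subspace spanned by vectors with
rational coordinates. -/
def IsQLinear {n : ℕ} (Q : Submodule ℂ (Fin n → ℂ)) : Prop :=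
  ∃ S : Set (Fin n → ℚ), Q = Submodule.span ℂ ((fun v => fun i => ((v i : ℚ) : ℂ)) '' S)

/-- A `ℂ`-linear subspace of `ℂⁿ` defined over `ℝ`: spanned over `ℂ` by vectors
with real coordinates. -/
def IsRealDefined {n : ℕ} (L : Submodule ℂ (Fin n → ℂ)) : Prop :=
  ∃ S : Set (Fin n → ℝ), L = Submodule.span ℂ ((fun v => fun i => ((v i : ℝ) : ℂ)) '' S)

/-- The coordinatewise exponential map `ℂⁿ → (ℂˣ)ⁿ`. -/
def expMap {n : ℕ} (z : Fin n → ℂ) : Fin n → ℂˣ :=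
  fun i => Units.mk0 (Complex.exp (z i)) (Complex.exp_ne_zero _)

/-- The subgroup `exp(Q)` of `(ℂˣ)ⁿ`, for `Q` a subspace of `ℂⁿ`. -/
def expSubgroup {n : ℕ} (Q : Submodule ℂ (Fin n → ℂ)) : Subgroup (Fin n → ℂˣ) where
  carrier := expMap '' (Q : Set (Fin n → ℂ))
  one_mem' := ⟨0, Q.zero_mem, by ext i; simp [expMap]⟩
  mul_mem' := by
    rintro _ _ ⟨a, ha, rfl⟩ ⟨b, hb, rfl⟩
    exact ⟨a + b, Q.add_mem ha hb, by ext i; simp [expMap, Complex.exp_add]⟩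
  inv_mem' := by
    rintro _ ⟨a, ha, rfl⟩
    exact ⟨-a, Q.neg_mem ha, by ext i; simp [expMap, Complex.exp_neg]⟩

/-- A subset `V ⊆ ℂⁿ × (ℂˣ)ⁿ` is additively free if its projection to `ℂⁿ` is not
contained in any translate of a proper `ℚ`-linear subspace of `ℂⁿ`. -/
def AdditivelyFree {n : ℕ} (V : Set ((Fin n → ℂ) × (Fin n → ℂˣ))) : Prop :=
  ∀ (a : Fin n → ℂ) (Q : Submodule ℂ (Fin n → ℂ)), IsQLinear Q → Q ≠ ⊤ →
    ¬ (Prod.fst '' V ⊆ {z | z - a ∈ Q})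

/-- Regular functions on `ℂⁿ × (ℂˣ)ⁿ`: polynomials in the first `n` variables and
Laurent polynomials in the last `n` variables. -/
abbrev PolyLaurent (n : ℕ) : Type := (Fin n → ℤ) →₀ MvPolynomial (Fin n) ℂ

/-- Evaluation of a regular function on `ℂⁿ × (ℂˣ)ⁿ`. -/
def PolyLaurent.eval {n : ℕ} (p : PolyLaurent n)
    (zw : (Fin n → ℂ) × (Fin n → ℂˣ)) : ℂ :=
  ∑ k ∈ p.support, MvPolynomial.eval zw.1 (p k) * ∏ i, ((zw.2 i : ℂ) ^ (k i))

/-- The Zariski topology on `ℂⁿ × (ℂˣ)ⁿ`. -/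
def zariskiProd (n : ℕ) : TopologicalSpace ((Fin n → ℂ) × (Fin n → ℂˣ)) :=
  TopologicalSpace.generateFrom
    {U | ∃ p : PolyLaurent n, U = {zw | PolyLaurent.eval p zw ≠ 0}}

/-- The quotient map `π_Q : ℂⁿ × (ℂˣ)ⁿ → (ℂⁿ/Q) × ((ℂˣ)ⁿ/exp(Q))`. -/
def piQ {n : ℕ} (Q : Submodule ℂ (Fin n → ℂ)) :
    (Fin n → ℂ) × (Fin n → ℂˣ) →
      ((Fin n → ℂ) ⧸ Q) × ((Fin n → ℂˣ) ⧸ expSubgroup Q) :=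
  fun p => (Submodule.Quotient.mk p.1, QuotientGroup.mk p.2)

/-- The Zariski topology on the quotient `(ℂⁿ/Q) × ((ℂˣ)ⁿ/exp(Q))`, coinduced
along `π_Q` from the Zariski topology on `ℂⁿ × (ℂˣ)ⁿ`. -/
def zariskiQuot {n : ℕ} (Q : Submodule ℂ (Fin n → ℂ)) :
    TopologicalSpace (((Fin n → ℂ) ⧸ Q) × ((Fin n → ℂˣ) ⧸ expSubgroup Q)) :=
  (zariskiProd n).coinduced (piQ Q)

/-- The dimension of a subset `S` of a topological space: the topological Krull
dimension of `S` with the subspace topology. -/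
def zdim {α : Type*} (t : TopologicalSpace α) (S : Set α) : WithBot ℕ∞ :=
  @topologicalKrullDim S (TopologicalSpace.induced Subtype.val t)

/-- `V ⊆ ℂⁿ × (ℂˣ)ⁿ` is rotund if for every `ℚ`-linear subspace `Q ≤ ℂⁿ`, the
dimension of the Zariski closure of `π_Q(V)` is at least `n - dim Q`. -/
def Rotund {n : ℕ} (V : Set ((Fin n → ℂ) × (Fin n → ℂˣ))) : Prop :=
  ∀ Q : Submodule ℂ (Fin n → ℂ), IsQLinear Q →
    (((n - Module.finrank ℂ Q : ℕ) : ℕ∞) : WithBot ℕ∞) ≤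
      zdim (zariskiQuot Q) (@closure _ (zariskiQuot Q) (piQ Q '' V))

/-- The `δ`-map of a subvariety of `ℂⁿ × (ℂˣ)ⁿ`: `(z, w) ↦ w · exp(-z)`. -/
def deltaMap {n : ℕ} : ((Fin n → ℂ) × (Fin n → ℂˣ)) → (Fin n → ℂˣ) :=
  fun p => fun i => p.2 i * (expMap p.1 i)⁻¹

/-- The `δ`-map of `V` is open at `p ∈ V` if there is an open neighbourhood of `p`
in `V` (subspace topology, standard/Euclidean) on which `δ` restricts to an open
map into `(ℂˣ)ⁿ`. -/
def DeltaOpenAt {n : ℕ} (V : Set ((Fin n → ℂ) × (Fin n → ℂˣ)))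
    (p : (Fin n → ℂ) × (Fin n → ℂˣ)) : Prop :=
  ∃ N : Set ((Fin n → ℂ) × (Fin n → ℂˣ)), IsOpen N ∧ p ∈ N ∧
    ∀ O : Set ((Fin n → ℂ) × (Fin n → ℂˣ)), IsOpen O →
      IsOpen (deltaMap '' (O ∩ N ∩ V))

/-- The map `Log : (ℂˣ)ⁿ → ℝⁿ`, `w ↦ (log |w₁|, …, log |wₙ|)`. -/
def torusLog {n : ℕ} (w : Fin n → ℂˣ) : Fin n → ℝ :=
  fun i => Real.log ‖((w i : ℂ))‖

/-- The amoeba of `W ⊆ (ℂˣ)ⁿ`: the image of `W` under `Log`. -/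
def amoeba {n : ℕ} (W : Set (Fin n → ℂˣ)) : Set (Fin n → ℝ) :=
  torusLog '' W

/-- The coordinatewise real part of a subset of `ℂⁿ`. -/
def rePart {n : ℕ} (L : Set (Fin n → ℂ)) : Set (Fin n → ℝ) :=
  (fun z => fun i => (z i).re) '' L

/-- The unit polycircle `𝕊₁ⁿ ⊆ (ℂˣ)ⁿ`. -/
def unitTorus (n : ℕ) : Set (Fin n → ℂˣ) :=
  {w | ∀ i, ‖((w i : ℂ))‖ = 1}

/-- `S` is Zariski-dense in `W` if every Laurent polynomial vanishing on `S`
vanishes identically on `W`. -/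
def ZariskiDenseIn {n : ℕ} (S W : Set (Fin n → ℂˣ)) : Prop :=
  ∀ p : LaurentPoly n, (∀ w ∈ S, LaurentPoly.eval p w = 0) →
    ∀ w ∈ W, LaurentPoly.eval p w = 0

/-- The linear functional `z ↦ k₁z₁ + … + kₙzₙ` attached to `k ∈ ℤⁿ`. -/
def intFunctional {n : ℕ} (k : Fin n → ℤ) : Module.Dual ℂ (Fin n → ℂ) :=
  ∑ i, (k i : ℂ) • (LinearMap.proj i : (Fin n → ℂ) →ₗ[ℂ] ℂ)

/-- The Newton polytope of a Laurent polynomial, as a subset of the dual space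
`(ℂⁿ)^∨` regarded as a real vector space. -/
def newtonPolytope {n : ℕ} (p : LaurentPoly n) : Set (Module.Dual ℂ (Fin n → ℂ)) :=
  convexHull ℝ (intFunctional '' (p.support : Set (Fin n → ℤ)))

/-- Finite subsets `A₁, …, A_d` of a `ℂ`-vector space satisfy the Rado property if
there is a basis `v₁, …, v_d` of the space with `vⱼ ∈ Aⱼ` for each `j`. -/
def RadoProperty {d : ℕ} {V : Type*} [AddCommGroup V] [Module ℂ V]
    (A : Fin d → Set V) : Prop :=
  ∃ v : Fin d → V, (∀ j, v j ∈ A j) ∧ LinearIndependent ℂ v ∧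
    Submodule.span ℂ (Set.range v) = ⊤

/-!
`Log` is a homomorphism `(ℂˣ)ⁿ → ℝⁿ` with kernel `𝕊₁ⁿ`, and `Log ∘ exp = Re`. Hence
`Log⁻¹(ℜ(L)) = Log⁻¹(Log(exp L)) = exp(L) · ker Log = exp(L) · 𝕊₁ⁿ`.
-/

theorem torusLog_mul {n : ℕ} (v w : Fin n → ℂˣ) :
    torusLog (v * w) = torusLog v + torusLog w := by
  funext i
  simp only [torusLog, Pi.mul_apply, Units.val_mul, norm_mul, Pi.add_apply]
  exact Real.log_mul (norm_ne_zero_iff.2 (v i).ne_zero) (norm_ne_zero_iff.2 (w i).ne_zero)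

theorem torusLog_mul_inv {n : ℕ} (v w : Fin n → ℂˣ) :
    torusLog (v * w⁻¹) = torusLog v - torusLog w :=
  eq_sub_of_add_eq (by rw [← torusLog_mul, inv_mul_cancel_right])

theorem torusLog_expMap {n : ℕ} (z : Fin n → ℂ) :
    torusLog (expMap z) = fun i => (z i).re := by
  funext i
  simp only [torusLog, expMap, Units.val_mk0, Complex.norm_exp, Real.log_exp]

theorem torusLog_eq_zero_iff {n : ℕ} (w : Fin n → ℂˣ) :
    torusLog w = 0 ↔ w ∈ unitTorus n := by
  simp only [funext_iff, torusLog, Pi.zero_apply, unitTorus, Set.mem_ofPred_eq, Real.log_eq_zero,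
    norm_eq_zero, Units.ne_zero, false_or]
  exact forall_congr' fun i => or_iff_left (by linarith [norm_nonneg (w i : ℂ)])

theorem stmt_11_general {n : ℕ}
    (L : Submodule ℂ (Fin n → ℂ)) :
    {w : Fin n → ℂˣ | ∃ s ∈ unitTorus n, ∃ l ∈ L, w = s * expMap l} =
      torusLog ⁻¹' rePart (L : Set (Fin n → ℂ)) := by
  ext w
  constructor
  · rintro ⟨s, hs, l, hl, rfl⟩
    refine ⟨l, hl, ?_⟩
    rw [torusLog_mul, torusLog_expMap, (torusLog_eq_zero_iff s).2 hs, zero_add]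
  · rintro ⟨l, hl, hlog⟩
    have hunit : w * (expMap l)⁻¹ ∈ unitTorus n := by
      rw [← torusLog_eq_zero_iff, torusLog_mul_inv, torusLog_expMap, ← hlog, sub_self]
    exact ⟨w * (expMap l)⁻¹, hunit, l, hl, by group⟩

/-- If `L ≤ ℂⁿ` is defined over `ℝ`, then
`exp(L)·𝕊₁ⁿ = Log⁻¹(ℜ(L))`. -/
theorem stmt_11 {n : ℕ}
    (L : Submodule ℂ (Fin n → ℂ)) (hreal : IsRealDefined L) :
    {w : Fin n → ℂˣ | ∃ s ∈ unitTorus n, ∃ l ∈ L, w = s * expMap l} =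
      torusLog ⁻¹' rePart (L : Set (Fin n → ℂ)) :=
  stmt_11_general L
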